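/- arXiv:1310.1173 — 2 statements merged into one kernel-verified Lean document; each statement's English description precedes it below -/
import Mathlib

section
/- Let d ≥ 1, Δt > 0, let a₀ be a symmetric positive definite d×d real matrix and a a symmetric positive semidefinite d×d real matrix. Define η(a,x) := 1 − (1/2)·Tr(a·a₀^{−1}) + (1/(2Δt))·xᵀa₀^{−1}·a·a₀^{−1}x and ρ(a,x) := (2πΔt)^{−d/2}·(det a₀)^{−1/2}·exp(−xᵀa₀^{−1}x/(2Δt))·η(a,x) for x ∈ ℝ^d. Then: (i) ∫_{ℝ^d} ρ(a,x) dx = 1; (ii) ∫_{ℝ^d} x·ρ(a,x) dx = 0 (componentwise); (iii) if Tr(a·a₀^{−1}) ≤ 2, then ρ(a,x) ≥ 0 for all x ∈ ℝ^d, so that ρ(a,·) is a probability density on ℝ^d. -/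
open MeasureTheory ProbabilityTheory Matrix Real

noncomputable section

abbrev Mat (d : ℕ) : Type := Matrix (Fin d) (Fin d) ℝ

/-- The polynomial weight `η(a,x) = 1 − ½·Tr(a·a₀⁻¹) + (1/(2Δt))·xᵀa₀⁻¹·a·a₀⁻¹x`. -/
def eta (d : ℕ) (Δt : ℝ) (a₀ a : Mat d) (x : Fin d → ℝ) : ℝ :=
  1 - (1 / 2) * (a * a₀⁻¹).trace
    + (1 / (2 * Δt)) * (x ⬝ᵥ (a₀⁻¹ * a * a₀⁻¹).mulVec x)

/-- The density `ρ(a,x)` of the probabilistic scheme: a centered Gaussian density with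
covariance `a₀·Δt` multiplied by the polynomial weight `η(a,·)`. -/
def rho (d : ℕ) (Δt : ℝ) (a₀ a : Mat d) (x : Fin d → ℝ) : ℝ :=
  (2 * Real.pi * Δt) ^ (-(d : ℝ) / 2) * (a₀.det) ^ (-(1 : ℝ) / 2)
    * Real.exp (-(x ⬝ᵥ a₀⁻¹.mulVec x) / (2 * Δt)) * eta d Δt a₀ a x

/-!
Substituting `x = √Δt • a₀^{1/2} u` turns `ρ(a,x) dx` into
`(2π)^{-d/2} exp(-|u|²/2) (1 - ½ Tr(a a₀⁻¹) + ½ uᵀ N u) du` with `Tr N = Tr(a a₀⁻¹)`. The standard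
Gaussian has second moments `δᵢⱼ`, so the quadratic term contributes exactly `½ Tr(a a₀⁻¹)` and the
total mass is `1`. The first moments vanish because `ρ(a,·)` is even, and `ρ(a,·) ≥ 0` because
`a₀⁻¹ a a₀⁻¹` is positive semidefinite, so `η(a,x) ≥ 1 - ½ Tr(a a₀⁻¹) ≥ 0`.
-/

theorem integral_eq_zero_of_odd {G : Type*} [MeasurableSpace G] [AddGroup G] [MeasurableNeg G]
    (μ : Measure G) [μ.IsNegInvariant] {f : G → ℝ} (hf : ∀ x, f (-x) = -f x) :
    ∫ x, f x ∂μ = 0 := by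
  have h := integral_neg_eq_self f μ
  simp only [hf, integral_neg] at h
  linarith

theorem integrable_pow_mul_exp_neg_sq_div_two (n : ℕ) :
    Integrable fun x : ℝ => x ^ n * exp (-x ^ 2 / 2) := by
  have h := integrable_rpow_mul_exp_neg_mul_sq (b := 1 / 2) (by norm_num)
    (s := n) (by linarith [n.cast_nonneg (α := ℝ)])
  refine h.congr (ae_of_all _ fun x => ?_)
  simp only [rpow_natCast]
  ring_nf

theorem integrable_exp_neg_sq_div_two : Integrable fun x : ℝ => exp (-x ^ 2 / 2) := by
  simpa using integrable_pow_mul_exp_neg_sq_div_two 0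

theorem integral_exp_neg_sq_div_two : ∫ x : ℝ, exp (-x ^ 2 / 2) = √(2 * π) := by
  have h := integral_gaussian (1 / 2)
  simp only [div_div_eq_mul_div, div_one] at h
  rw [mul_comm] at h
  simpa only [neg_mul, one_div, inv_mul_eq_div, neg_div] using h

theorem integral_mul_exp_neg_sq_div_two : ∫ x : ℝ, x * exp (-x ^ 2 / 2) = 0 :=
  integral_eq_zero_of_odd volume fun x => by simp only [neg_sq, neg_mul]

theorem integral_sq_mul_exp_neg_sq_div_two : ∫ x : ℝ, x ^ 2 * exp (-x ^ 2 / 2) = √(2 * π) := by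
  have hderiv (x : ℝ) : HasDerivAt (fun y => y * exp (-y ^ 2 / 2))
      (exp (-x ^ 2 / 2) - x ^ 2 * exp (-x ^ 2 / 2)) x :=
    ((hasDerivAt_id' x).fun_mul (((hasDerivAt_pow 2 x).fun_neg.div_const 2).exp)).congr_deriv
      (by push_cast; ring)
  have hint1 : Integrable fun x : ℝ => x * exp (-x ^ 2 / 2) := by
    simpa using integrable_pow_mul_exp_neg_sq_div_two 1
  have hint2 := integrable_pow_mul_exp_neg_sq_div_two 2
  have h := integral_eq_zero_of_hasDerivAt_of_integrable hderiv
    (integrable_exp_neg_sq_div_two.sub hint2) hint1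
  rw [integral_sub integrable_exp_neg_sq_div_two hint2, sub_eq_zero,
    integral_exp_neg_sq_div_two] at h
  exact h.symm

section StandardGaussian

variable {ι : Type*} [Fintype ι]

theorem exp_neg_dotProduct_self_div_two (u : ι → ℝ) :
    exp (-(u ⬝ᵥ u) / 2) = ∏ k, exp (-u k ^ 2 / 2) := by
  rw [← exp_sum, dotProduct, ← Finset.sum_div, ← Finset.sum_neg_distrib]
  simp only [sq]

theorem integrable_exp_neg_dotProduct_self_div_two :
    Integrable fun u : ι → ℝ => exp (-(u ⬝ᵥ u) / 2) := by
  simp only [exp_neg_dotProduct_self_div_two]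
  exact Integrable.fintype_prod (f := fun _ x => exp (-x ^ 2 / 2)) fun _ =>
    integrable_exp_neg_sq_div_two

theorem integral_exp_neg_dotProduct_self_div_two :
    ∫ u : ι → ℝ, exp (-(u ⬝ᵥ u) / 2) = √(2 * π) ^ Fintype.card ι := by
  simp only [exp_neg_dotProduct_self_div_two]
  rw [integral_fintype_prod_volume_eq_pow (fun x : ℝ => exp (-x ^ 2 / 2)),
    integral_exp_neg_sq_div_two]

theorem dotProduct_mulVec_mul_eq_sum (N : Matrix ι ι ℝ) (u : ι → ℝ) (w : ℝ) :
    (u ⬝ᵥ N *ᵥ u) * w = ∑ i, ∑ j, N i j * (u i * u j * w) := by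
  simp only [dotProduct, mulVec, Finset.mul_sum, Finset.sum_mul]
  exact Finset.sum_congr rfl fun i _ => Finset.sum_congr rfl fun j _ => by ring

theorem mulVec_dotProduct_mulVec_mulVec (S N : Matrix ι ι ℝ) (u : ι → ℝ) :
    (S *ᵥ u) ⬝ᵥ N *ᵥ (S *ᵥ u) = u ⬝ᵥ (Sᵀ * N * S) *ᵥ u := by
  rw [dotProduct_mulVec, vecMul_mulVec, ← dotProduct_mulVec, mulVec_mulVec]

variable [DecidableEq ι]

theorem mul_mul_exp_neg_dotProduct_self_div_two (i j : ι) (u : ι → ℝ) :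
    u i * u j * exp (-(u ⬝ᵥ u) / 2) =
      ∏ k, u k ^ ((if k = i then 1 else 0) + (if k = j then 1 else 0)) * exp (-u k ^ 2 / 2) := by
  simp only [Finset.prod_mul_distrib, pow_add, pow_ite, pow_one, pow_zero,
    Finset.prod_ite_eq', Finset.mem_univ, if_true, exp_neg_dotProduct_self_div_two]

theorem integrable_mul_mul_exp_neg_dotProduct_self_div_two (i j : ι) :
    Integrable fun u : ι → ℝ => u i * u j * exp (-(u ⬝ᵥ u) / 2) := by
  simp only [mul_mul_exp_neg_dotProduct_self_div_two i j]
  exact Integrable.fintype_prod fun _ => integrable_pow_mul_exp_neg_sq_div_two _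

theorem integral_mul_mul_exp_neg_dotProduct_self_div_two (i j : ι) :
    ∫ u : ι → ℝ, u i * u j * exp (-(u ⬝ᵥ u) / 2) =
      if i = j then √(2 * π) ^ Fintype.card ι else 0 := by
  simp only [mul_mul_exp_neg_dotProduct_self_div_two i j]
  rw [integral_fintype_prod_volume_eq_prod
    (fun k x => x ^ ((if k = i then 1 else 0) + (if k = j then 1 else 0)) * exp (-x ^ 2 / 2))]
  split_ifs with hij
  · subst hij
    rw [← Finset.card_univ, ← Finset.prod_const]
    refine Finset.prod_congr rfl fun k _ => ?_
    by_cases hk : k = i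
    · simpa [hk] using integral_sq_mul_exp_neg_sq_div_two
    · simpa [hk] using integral_exp_neg_sq_div_two
  · exact Finset.prod_eq_zero (Finset.mem_univ i)
      (by simpa [hij, Ne.symm hij] using integral_mul_exp_neg_sq_div_two)

theorem integrable_dotProduct_mulVec_mul_exp_neg_dotProduct_self_div_two (N : Matrix ι ι ℝ) :
    Integrable fun u : ι → ℝ => (u ⬝ᵥ N *ᵥ u) * exp (-(u ⬝ᵥ u) / 2) := by
  simp only [dotProduct_mulVec_mul_eq_sum]
  exact integrable_finsetSum _ fun i _ => integrable_finsetSum _ fun j _ =>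
    (integrable_mul_mul_exp_neg_dotProduct_self_div_two i j).const_mul (N i j)

theorem integral_dotProduct_mulVec_mul_exp_neg_dotProduct_self_div_two (N : Matrix ι ι ℝ) :
    ∫ u : ι → ℝ, (u ⬝ᵥ N *ᵥ u) * exp (-(u ⬝ᵥ u) / 2) = N.trace * √(2 * π) ^ Fintype.card ι := by
  have hint (i j : ι) := (integrable_mul_mul_exp_neg_dotProduct_self_div_two i j).const_mul (N i j)
  simp only [dotProduct_mulVec_mul_eq_sum]
  rw [integral_finsetSum _ fun i _ => integrable_finsetSum _ fun j _ => hint i j]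
  simp only [integral_finsetSum _ fun j _ => hint _ j, integral_const_mul,
    integral_mul_mul_exp_neg_dotProduct_self_div_two, mul_ite, mul_zero, Finset.sum_ite_eq,
    Finset.mem_univ, if_true, ← Finset.sum_mul]
  rfl

theorem integral_comp_mulVec {E : Type*} [NormedAddCommGroup E] [NormedSpace ℝ E]
    (M : Matrix ι ι ℝ) (hM : M.det ≠ 0) (g : (ι → ℝ) → E) :
    ∫ x, g (M *ᵥ x) = |M.det|⁻¹ • ∫ x, g x := by
  let e : (ι → ℝ) ≃L[ℝ] (ι → ℝ) :=
    (M.toLinearEquiv' (M.invertibleOfIsUnitDet hM.isUnit)).toContinuousLinearEquiv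
  have hmap : Measure.map e volume = ENNReal.ofReal |M.det|⁻¹ • volume := by
    have h := Real.map_linearMap_volume_pi_eq_smul_volume_pi (f := Matrix.toLin' M)
      (by rwa [LinearMap.det_toLin'])
    rwa [LinearMap.det_toLin', abs_inv] at h
  have hcomp : ∫ x, g (M *ᵥ x) = ∫ x, g x ∂(Measure.map e volume) :=
    (e.toHomeomorph.measurableEmbedding.integral_map g).symm
  rw [hcomp, hmap, integral_smul_measure, ENNReal.toReal_ofReal (by positivity)]

open scoped MatrixOrder in
theorem integral_exp_neg_dotProduct_inv_mulVec_mul_add {A : Matrix ι ι ℝ} (hA : A.PosDef) (α : ℝ)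
    (B : Matrix ι ι ℝ) :
    ∫ x, exp (-(x ⬝ᵥ A⁻¹ *ᵥ x) / 2) * (α + x ⬝ᵥ B *ᵥ x) =
      √(2 * π) ^ Fintype.card ι * √A.det * (α + (B * A).trace) := by
  set S := CFC.sqrt A
  have hSS : S * S = A := CFC.sqrt_mul_sqrt_self A hA.posSemidef.nonneg
  have hST : Sᵀ = S := (CFC.sqrt_nonneg A).posSemidef.1
  have hdetS : S.det = √A.det := by simpa using hA.posSemidef.det_sqrt
  have hdetS_pos : 0 < S.det := hdetS ▸ sqrt_pos.2 hA.det_pos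
  have hSAS : Sᵀ * A⁻¹ * S = 1 := by
    have hS : IsUnit S.det := hdetS_pos.ne'.isUnit
    rw [hST, ← hSS, Matrix.mul_inv_rev, ← Matrix.mul_assoc, mul_nonsing_inv _ hS, Matrix.one_mul,
      nonsing_inv_mul _ hS]
  have hsubst (u : ι → ℝ) :
      exp (-((S *ᵥ u) ⬝ᵥ A⁻¹ *ᵥ (S *ᵥ u)) / 2) * (α + (S *ᵥ u) ⬝ᵥ B *ᵥ (S *ᵥ u)) =
        α * exp (-(u ⬝ᵥ u) / 2) + (u ⬝ᵥ (Sᵀ * B * S) *ᵥ u) * exp (-(u ⬝ᵥ u) / 2) := by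
    rw [mulVec_dotProduct_mulVec_mulVec, mulVec_dotProduct_mulVec_mulVec, hSAS, one_mulVec]
    ring
  have hchange := integral_comp_mulVec S hdetS_pos.ne'
    fun x => exp (-(x ⬝ᵥ A⁻¹ *ᵥ x) / 2) * (α + x ⬝ᵥ B *ᵥ x)
  simp only [hsubst, smul_eq_mul] at hchange
  rw [integral_add (integrable_exp_neg_dotProduct_self_div_two.const_mul α)
      (integrable_dotProduct_mulVec_mul_exp_neg_dotProduct_self_div_two _),
    integral_const_mul, integral_exp_neg_dotProduct_self_div_two,
    integral_dotProduct_mulVec_mul_exp_neg_dotProduct_self_div_two, eq_inv_mul_iff_mul_eq₀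
      (by positivity), abs_of_pos hdetS_pos, hdetS, hST, trace_mul_cycle, hSS, trace_mul_comm]
    at hchange
  rw [← hchange]
  ring

end StandardGaussian

theorem rpow_neg_natCast_div_two {x : ℝ} (hx : 0 ≤ x) (n : ℕ) :
    x ^ (-(n : ℝ) / 2) = (√x ^ n)⁻¹ := by
  rw [rpow_div_two_eq_sqrt _ hx, rpow_neg (sqrt_nonneg x), rpow_natCast]

section Scheme

variable {d : ℕ} {Δt : ℝ} {a₀ a : Mat d}

theorem rho_eq_gaussian_form (hΔt : Δt ≠ 0) (ha₀ : IsUnit a₀.det) (x : Fin d → ℝ) :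
    rho d Δt a₀ a x = (2 * π * Δt) ^ (-(d : ℝ) / 2) * a₀.det ^ (-(1 : ℝ) / 2) *
      (exp (-(x ⬝ᵥ (Δt • a₀)⁻¹ *ᵥ x) / 2) *
        (1 - 1 / 2 * (a * a₀⁻¹).trace + x ⬝ᵥ ((2 * Δt)⁻¹ • (a₀⁻¹ * a * a₀⁻¹)) *ᵥ x)) := by
  rw [show Δt • a₀ = (Units.mk0 Δt hΔt) • a₀ from rfl, inv_smul' _ _ ha₀]
  simp only [rho, eta, smul_mulVec, dotProduct_smul, Units.smul_def, Units.val_inv_eq_inv_val,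
    Units.val_mk0, smul_eq_mul]
  field_simp

theorem integral_rho (hΔt : 0 < Δt) (ha₀ : a₀.PosDef) : ∫ x, rho d Δt a₀ a x = 1 := by
  have hdet := ha₀.det_pos
  have htrace : ((2 * Δt)⁻¹ • (a₀⁻¹ * a * a₀⁻¹) * (Δt • a₀)).trace = 1 / 2 * (a * a₀⁻¹).trace := by
    rw [smul_mul_smul_comm, trace_smul, Matrix.mul_assoc, nonsing_inv_mul _ hdet.ne'.isUnit,
      Matrix.mul_one, trace_mul_comm, smul_eq_mul]
    field_simp
  have hsqrt_pow : √(Δt ^ d) = √Δt ^ d := by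
    rw [← sqrt_sq (by positivity : 0 ≤ √Δt ^ d), ← pow_mul, mul_comm, pow_mul, sq_sqrt hΔt.le]
  simp only [rho_eq_gaussian_form hΔt.ne' hdet.ne'.isUnit]
  rw [integral_const_mul, integral_exp_neg_dotProduct_inv_mulVec_mul_add (ha₀.smul hΔt), htrace,
    det_smul, Fintype.card_fin, rpow_neg_natCast_div_two (by positivity),
    show -(1 : ℝ) / 2 = -((1 : ℕ) : ℝ) / 2 by norm_num, rpow_neg_natCast_div_two hdet.le,
    sqrt_mul (by positivity), sqrt_mul (by positivity), sqrt_mul (by positivity), mul_pow,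
    pow_one, hsqrt_pow]
  field_simp
  ring

theorem rho_neg (x : Fin d → ℝ) : rho d Δt a₀ a (-x) = rho d Δt a₀ a x := by
  simp [rho, eta, mulVec_neg]

theorem integral_mul_rho (i : Fin d) : ∫ x, x i * rho d Δt a₀ a x = 0 :=
  integral_eq_zero_of_odd volume fun x => by rw [rho_neg, Pi.neg_apply, neg_mul]

theorem eta_nonneg (hΔt : 0 ≤ Δt) (ha₀ : a₀.IsHermitian) (ha : a.PosSemidef)
    (htr : (a * a₀⁻¹).trace ≤ 2) (x : Fin d → ℝ) : 0 ≤ eta d Δt a₀ a x := by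
  have hconj : (a₀⁻¹ * a * a₀⁻¹).PosSemidef := by
    have h := ha.conjTranspose_mul_mul_same a₀⁻¹
    rwa [ha₀.inv.eq] at h
  have hquad : 0 ≤ x ⬝ᵥ (a₀⁻¹ * a * a₀⁻¹) *ᵥ x := by
    simpa using hconj.dotProduct_mulVec_nonneg x
  have : 0 ≤ 1 / (2 * Δt) * (x ⬝ᵥ (a₀⁻¹ * a * a₀⁻¹) *ᵥ x) := by positivity
  unfold eta
  linarith

theorem rho_nonneg (hΔt : 0 ≤ Δt) (ha₀ : a₀.PosSemidef) (ha : a.PosSemidef)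
    (htr : (a * a₀⁻¹).trace ≤ 2) (x : Fin d → ℝ) : 0 ≤ rho d Δt a₀ a x := by
  have := ha₀.det_nonneg
  have := eta_nonneg hΔt ha₀.isHermitian ha htr x
  unfold rho
  positivity

end Scheme

theorem probabilistic_scheme_density_general
    (d : ℕ) (Δt : ℝ) (hΔt : 0 < Δt)
    (a₀ a : Mat d) (ha₀ : a₀.PosDef) (ha : a.PosSemidef) :
    ((∫ x : Fin d → ℝ, rho d Δt a₀ a x) = 1) ∧
    (∀ i : Fin d, (∫ x : Fin d → ℝ, x i * rho d Δt a₀ a x) = 0) ∧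
    ((a * a₀⁻¹).trace ≤ 2 → ∀ x : Fin d → ℝ, 0 ≤ rho d Δt a₀ a x) :=
  ⟨integral_rho hΔt ha₀, integral_mul_rho, fun htr => rho_nonneg hΔt.le ha₀.posSemidef ha htr⟩

/-- **The weight of the probabilistic scheme is a probability density.**
Let `d ≥ 1`, `Δt > 0`, `a₀` symmetric positive definite and `a` symmetric positive
semidefinite.  Then (i) `∫ ρ(a,x) dx = 1`; (ii) `∫ x·ρ(a,x) dx = 0` componentwise;
(iii) if `Tr(a·a₀⁻¹) ≤ 2` then `ρ(a,·) ≥ 0`, so `ρ(a,·)` is a probability density. -/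
theorem probabilistic_scheme_density
    (d : ℕ) (hd : 1 ≤ d) (Δt : ℝ) (hΔt : 0 < Δt)
    (a₀ a : Mat d) (ha₀ : a₀.PosDef) (ha : a.PosSemidef) :
    ((∫ x : Fin d → ℝ, rho d Δt a₀ a x) = 1) ∧
    (∀ i : Fin d, (∫ x : Fin d → ℝ, x i * rho d Δt a₀ a x) = 0) ∧
    ((a * a₀⁻¹).trace ≤ 2 → ∀ x : Fin d → ℝ, 0 ≤ rho d Δt a₀ a x) :=
  probabilistic_scheme_density_general d Δt hΔt a₀ a ha₀ ha
end
end

section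
/- Let (Ω,F,P) be a probability space, G ⊆ F a sub-σ-algebra, and μ > 0, Δt > 0 with μ·Δt < 1. Let F : Ω×ℝ → ℝ be such that for each y ∈ ℝ the map ω ↦ F(ω,y) is G-measurable and integrable, and for P-a.e. ω the map y ↦ F(ω,y) is μ-Lipschitz. For ξ ∈ L²(P), let Y(ξ) denote the unique G-measurable random variable solving Y(ξ) = E[ξ|G] − F(·,Y(ξ))·Δt P-a.s. (which exists and is unique since μ·Δt < 1). If ξ¹ ≤ ξ² P-a.s., then Y(ξ¹) ≤ Y(ξ²) P-a.s. -/
/-!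
Rewriting the fixed-point equation as `Y + F(·, Y) Δt = E[ξ|G]`, the map `y ↦ y + F(ω, y) Δt`
is strictly increasing because `F(ω, ·)` is `μ`-Lipschitz and `μ Δt < 1`. Its inverse therefore
preserves order, and `E[ξ¹|G] ≤ E[ξ²|G]` a.s. by monotonicity of conditional expectation.
-/

open MeasureTheory ProbabilityTheory

theorem strictMono_add_mul_of_abs_sub_le {f : ℝ → ℝ} {μ Δt : ℝ} (hΔt : 0 ≤ Δt)
    (hμΔt : μ * Δt < 1) (hf : ∀ x y, |f x - f y| ≤ μ * |x - y|) :
    StrictMono fun y => y + f y * Δt := by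
  intro x y hxy
  have hlip : f x - f y ≤ μ * (y - x) := by
    calc f x - f y ≤ |f x - f y| := le_abs_self _
      _ ≤ μ * |x - y| := hf x y
      _ = μ * (y - x) := by rw [abs_sub_comm, abs_of_pos (sub_pos.mpr hxy)]
  have hgap : 0 < (1 - μ * Δt) * (y - x) := mul_pos (by linarith) (by linarith)
  show x + f x * Δt < y + f y * Δt
  nlinarith [mul_le_mul_of_nonneg_right hlip hΔt]

theorem one_step_comparison_general
    (Ω : Type) [m0 : MeasurableSpace Ω] (P : Measure Ω) [IsProbabilityMeasure P]
    (G : MeasurableSpace Ω)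
    (μ Δt : ℝ) (hΔt : 0 < Δt) (hμΔt : μ * Δt < 1)
    (F : Ω → ℝ → ℝ)
    (hFlip : ∀ᵐ ω ∂P, ∀ y1 y2 : ℝ, |F ω y1 - F ω y2| ≤ μ * |y1 - y2|)
    (ξ1 ξ2 : Ω → ℝ) (hξ1 : MemLp ξ1 2 P) (hξ2 : MemLp ξ2 2 P)
    (Y1 Y2 : Ω → ℝ)
    (hY1 : Y1 =ᵐ[P] fun ω => (P[ξ1|G]) ω - F ω (Y1 ω) * Δt)
    (hY2 : Y2 =ᵐ[P] fun ω => (P[ξ2|G]) ω - F ω (Y2 ω) * Δt)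
    (hle : ξ1 ≤ᵐ[P] ξ2) :
    Y1 ≤ᵐ[P] Y2 := by
  have hcond : P[ξ1|G] ≤ᵐ[P] P[ξ2|G] :=
    condExp_mono (hξ1.integrable one_le_two) (hξ2.integrable one_le_two) hle
  filter_upwards [hY1, hY2, hFlip, hcond] with ω h1 h2 hlip hc
  exact (strictMono_add_mul_of_abs_sub_le hΔt.le hμΔt hlip).le_iff_le.mp (by linarith)

/-- **One-step comparison for the implicit backward scheme.**
Let `G ⊆ F` be a sub-σ-algebra, `μ > 0`, `Δt > 0` with `μ·Δt < 1`, and let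
`F : Ω×ℝ → ℝ` be `G`-measurable and integrable in `ω` for each `y`, and a.s.
`μ`-Lipschitz in `y`.  If `Y(ξ)` denotes the unique `G`-measurable solution of
`Y(ξ) = E[ξ|G] − F(·,Y(ξ))·Δt` a.s., then `ξ¹ ≤ ξ²` a.s. implies `Y(ξ¹) ≤ Y(ξ²)` a.s. -/
theorem one_step_comparison
    (Ω : Type) [m0 : MeasurableSpace Ω] (P : Measure Ω) [IsProbabilityMeasure P]
    (G : MeasurableSpace Ω) (hG : G ≤ m0)
    (μ Δt : ℝ) (hμ : 0 < μ) (hΔt : 0 < Δt) (hμΔt : μ * Δt < 1)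
    (F : Ω → ℝ → ℝ)
    (hFmeas : ∀ y : ℝ, Measurable[G] fun ω => F ω y)
    (hFint : ∀ y : ℝ, Integrable (fun ω => F ω y) P)
    (hFlip : ∀ᵐ ω ∂P, ∀ y1 y2 : ℝ, |F ω y1 - F ω y2| ≤ μ * |y1 - y2|)
    (ξ1 ξ2 : Ω → ℝ) (hξ1 : MemLp ξ1 2 P) (hξ2 : MemLp ξ2 2 P)
    (Y1 Y2 : Ω → ℝ)
    (hY1meas : Measurable[G] Y1) (hY2meas : Measurable[G] Y2)
    (hY1 : Y1 =ᵐ[P] fun ω => (P[ξ1|G]) ω - F ω (Y1 ω) * Δt)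
    (hY2 : Y2 =ᵐ[P] fun ω => (P[ξ2|G]) ω - F ω (Y2 ω) * Δt)
    (hle : ξ1 ≤ᵐ[P] ξ2) :
    Y1 ≤ᵐ[P] Y2 :=
  one_step_comparison_general Ω (m0 := m0) P G μ Δt hΔt hμΔt F hFlip ξ1 ξ2 hξ1 hξ2 Y1 Y2 hY1 hY2 hle
end
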